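/- For B with finite Haar expansion, the identity π_B* π_B = π_{S_B} + π_{S_B}* + D_B holds, where S_B = Σ_I B_I* B_I χ_I/|I| is the sweep of B and D_B is the block-diagonal operator defined by D_B(h_I ⊗ x) = h_I (1/|I|) Σ_{J⊊I} B_J* B_J x. -/

import Mathlib

open MeasureTheory ENNReal ContinuousLinearMap
open scoped Classical NNReal

noncomputable section

/-- A dyadic subinterval of the unit circle `[0,1)`, given by generation `n`
and position `k < 2 ^ n`; it represents `[k/2^n, (k+1)/2^n)`. -/
structure DyadicInterval where
  n : ℕ
  k : ℕ
  hk : k < 2 ^ n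

namespace DyadicInterval

/-- The underlying set of a dyadic interval. -/
def set (I : DyadicInterval) : Set ℝ :=
  Set.Ico ((I.k : ℝ) / 2 ^ I.n) (((I.k : ℝ) + 1) / 2 ^ I.n)

/-- The length `|I|` of a dyadic interval. -/
def len (I : DyadicInterval) : ℝ := ((2 : ℝ) ^ I.n)⁻¹

/-- The left half `I⁺`. -/
def left (I : DyadicInterval) : DyadicInterval :=
  ⟨I.n + 1, 2 * I.k, by have := I.hk; omega⟩

/-- The right half `I⁻`. -/
def right (I : DyadicInterval) : DyadicInterval :=
  ⟨I.n + 1, 2 * I.k + 1, by have := I.hk; omega⟩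

/-- The indicator function `χ_I`. -/
def ind (I : DyadicInterval) : ℝ → ℝ := Set.indicator I.set fun _ => (1 : ℝ)

/-- The Haar function `h_I = |I|^{-1/2} (χ_{I⁺} - χ_{I⁻})`. -/
def haar (I : DyadicInterval) : ℝ → ℝ :=
  fun t => (Real.sqrt I.len)⁻¹ * (I.left.ind t - I.right.ind t)

end DyadicInterval

/-- Normalized Lebesgue measure on the circle, realized as `[0,1) ⊆ ℝ`. -/
def circleMeasure : Measure ℝ := volume.restrict (Set.Ico (0 : ℝ) 1)

/-- Haar coefficient `f_I = ∫ f h_I`. -/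
def haarCoeff {E : Type*} [NormedAddCommGroup E] [NormedSpace ℝ E]
    (f : ℝ → E) (I : DyadicInterval) : E :=
  ∫ t, I.haar t • f t ∂circleMeasure

/-- Average `m_I f = |I|⁻¹ ∫_I f`. -/
def avg {E : Type*} [NormedAddCommGroup E] [NormedSpace ℝ E]
    (f : ℝ → E) (I : DyadicInterval) : E :=
  I.len⁻¹ • ∫ t in I.set, f t

variable {H : Type*} [NormedAddCommGroup H] [InnerProductSpace ℂ H] [CompleteSpace H]

/-- An operator-valued function with finite formal Haar expansion is recorded by its
finitely supported family of Haar coefficients `B_I ∈ L(H)`. -/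
abbrev OpCoeffs (H : Type*) [NormedAddCommGroup H] [InnerProductSpace ℂ H] :=
  DyadicInterval →₀ (H →L[ℂ] H)

/-- The function `B = ∑_I h_I B_I`. -/
def Bfun (b : OpCoeffs H) : ℝ → (H →L[ℂ] H) :=
  fun t => ∑ I ∈ b.support, I.haar t • b I

/-- The dyadic paraproduct `π_B f = ∑_I B_I (m_I f) h_I`. -/
def para (b : OpCoeffs H) (f : ℝ → H) : ℝ → H :=
  fun t => ∑ I ∈ b.support, I.haar t • (b I) (avg f I)

/-- The operator `Δ_B f = ∑_I B_I (f_I) χ_I / |I|`. -/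
def delta (b : OpCoeffs H) (f : ℝ → H) : ℝ → H :=
  fun t => ∑ I ∈ b.support, (I.len⁻¹ * I.ind t) • (b I) (haarCoeff f I)

/-- The Haar projection `P_I B = ∑_{J ⊆ I} h_J B_J` for `B` with finite Haar expansion. -/
def PIB (b : OpCoeffs H) (I : DyadicInterval) : ℝ → (H →L[ℂ] H) :=
  fun t => ∑ J ∈ b.support.filter fun J => J.set ⊆ I.set, J.haar t • b J

/-- The Haar projection `P_I G = ∑_{J ⊆ I} h_J G_J` for a general operator-valued `G`. -/
def PIBF (G : ℝ → (H →L[ℂ] H)) (I : DyadicInterval) : ℝ → (H →L[ℂ] H) :=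
  fun t => ∑' J : {J : DyadicInterval // J.set ⊆ I.set}, (J : DyadicInterval).haar t • haarCoeff G J

/-- The multiplier `Λ_B f = ∑_I (P_I B)(f_I) h_I`. -/
def Lambda (b : OpCoeffs H) (f : ℝ → H) : ℝ → H :=
  fun t => ∑' I : DyadicInterval, I.haar t • (PIB b I t) (haarCoeff f I)

/-- The multiplier `Λ_G f = ∑_I (P_I G)(f_I) h_I` for a general symbol `G`. -/
def LambdaF (G : ℝ → (H →L[ℂ] H)) (f : ℝ → H) : ℝ → H :=
  fun t => ∑' I : DyadicInterval, I.haar t • (PIBF G I t) (haarCoeff f I)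

/-- The paraproduct `π_G f = ∑_I G_I (m_I f) h_I` for a general symbol `G`. -/
def paraF (G : ℝ → (H →L[ℂ] H)) (f : ℝ → H) : ℝ → H :=
  fun t => ∑' I : DyadicInterval, I.haar t • (haarCoeff G I) (avg f I)

/-- The adjoint `π_G^* f = ∑_I G_I^* (f_I) χ_I/|I|` of the paraproduct with symbol `G`. -/
def paraStarF (G : ℝ → (H →L[ℂ] H)) (f : ℝ → H) : ℝ → H :=
  fun t => ∑' I : DyadicInterval,
    (I.len⁻¹ * I.ind t) • (ContinuousLinearMap.adjoint (haarCoeff G I)) (haarCoeff f I)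

/-- The coefficients of `B^*`, i.e. `I ↦ B_I^*`. -/
def adjC (b : OpCoeffs H) : OpCoeffs H :=
  b.mapRange (fun A => ContinuousLinearMap.adjoint A) (by simp)

/-- The sweep `S_B = ∑_I B_I^* B_I χ_I / |I|`. -/
def sweep (b : OpCoeffs H) : ℝ → (H →L[ℂ] H) :=
  fun t => ∑ I ∈ b.support,
    (I.len⁻¹ * I.ind t) • (ContinuousLinearMap.adjoint (b I) ∘L b I)

/-- The bilinear sweep `Δ(B,F) = ∑_J B_J^* F_J χ_J / |J|`. -/
def DeltaBil (b F : OpCoeffs H) : ℝ → (H →L[ℂ] H) :=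
  fun t => ∑ J ∈ b.support ∪ F.support,
    (J.len⁻¹ * J.ind t) • (ContinuousLinearMap.adjoint (b J) ∘L F J)

/-- The block diagonal operator `D_B (h_I ⊗ x) = h_I |I|⁻¹ ∑_{J ⊊ I} B_J^* B_J x`. -/
def Dop (b : OpCoeffs H) (f : ℝ → H) : ℝ → H :=
  fun t => ∑' I : DyadicInterval, I.haar t •
    (I.len⁻¹ • ∑ J ∈ b.support.filter fun J => J.set ⊂ I.set,
      (ContinuousLinearMap.adjoint (b J) ∘L b J)) (haarCoeff f I)

/-- The block diagonal operator `D_{B,F} (h_I ⊗ x) = h_I |I|⁻¹ ∑_{J ⊊ I} B_J^* F_J x`. -/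
def DopBil (b F : OpCoeffs H) (f : ℝ → H) : ℝ → H :=
  fun t => ∑' I : DyadicInterval, I.haar t •
    (I.len⁻¹ • ∑ J ∈ (b.support ∪ F.support).filter fun J => J.set ⊂ I.set,
      (ContinuousLinearMap.adjoint (b J) ∘L F J)) (haarCoeff f I)

/-- The operator norm of a map on `L²(𝕋, H)`, where `L²(𝕋,H)` is realized as the
(mean-zero) closed span of the Haar system `f = ∑_I f_I h_I`. -/
def l2NormOp (T : (ℝ → H) → (ℝ → H)) : ℝ≥0∞ :=
  ⨆ f : {f : ℝ → H // MemLp f 2 circleMeasure ∧ (∫ t, f t ∂circleMeasure) = 0 ∧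
      eLpNorm f 2 circleMeasure ≤ 1},
    eLpNorm (T f.1) 2 circleMeasure

/-- The Haar multiplier norm of a family `(Φ_I)_{I ∈ D}`, i.e. the norm of
`ℓ²(D,H) → L²(𝕋,H)`, `(f_I) ↦ ∑_I Φ_I (f_I) h_I`. -/
def multNorm (Φ : DyadicInterval → ℝ → (H →L[ℂ] H)) : ℝ≥0∞ :=
  ⨆ c : {c : DyadicInterval →₀ H // ∑ I ∈ c.support, ‖c I‖ ^ 2 ≤ 1},
    eLpNorm (fun t => ∑ I ∈ (c : DyadicInterval →₀ H).support,
      I.haar t • (Φ I t) ((c : DyadicInterval →₀ H) I)) 2 circleMeasure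

/-- The dyadic BMO norm of a vector-valued function. -/
def bmoNorm {E : Type*} [NormedAddCommGroup E] [NormedSpace ℝ E] (f : ℝ → E) : ℝ≥0∞ :=
  ⨆ I : DyadicInterval,
    ENNReal.ofReal (I.len⁻¹ * ∫ t in I.set, ‖f t - avg f I‖ ^ 2) ^ (1/2 : ℝ)

/-- The strong BMO norm `‖B‖_{SBMO} = sup_{‖e‖=1} ‖B e‖_{BMO(H)}`. -/
def sbmoNorm (B : ℝ → (H →L[ℂ] H)) : ℝ≥0∞ :=
  ⨆ e : {e : H // ‖e‖ = 1}, bmoNorm fun t => B t e.1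

/-- The `BMO_so` norm `‖B‖ = ‖B‖_{SBMO} + ‖B^*‖_{SBMO}`. -/
def bmosoNorm (B : ℝ → (H →L[ℂ] H)) : ℝ≥0∞ :=
  sbmoNorm B + sbmoNorm fun t => ContinuousLinearMap.adjoint (B t)

/-- A family of independent fair random signs `(σ_I)_{I ∈ D}`, modelling the product
probability space `Σ = {-1,1}^D`. -/
structure SignSpace {Ω : Type*} [MeasurableSpace Ω] (ℙ : Measure Ω)
    (σ : DyadicInterval → Ω → ℝ) : Prop where
  prob : IsProbabilityMeasure ℙ
  meas : ∀ I, Measurable (σ I)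
  values : ∀ I, ∀ ω, σ I ω = 1 ∨ σ I ω = -1
  indep : ProbabilityTheory.iIndepFun σ ℙ
  fair : ∀ I, ℙ {ω | σ I ω = 1} = 1/2

end

/-!
Both sides are finite sums over `J ∈ supp B` of `B_J^* B_J` applied to a vector, and the identity
holds at every point `t`. On the left, orthonormality of the Haar system gives
`(π_B f)_J = B_J (m_J f)`, so the vector is `|J|⁻¹ χ_J(t) m_J f`. On the right,
`(S_B)_I = ∑_{J ⊊ I} ⟨h_I⟩_J B_J^* B_J`, so collecting the terms of `π_{S_B}`, `π_{S_B}^*` and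
`D_B` by `J` leaves a sum over the strict ancestors `I` of `J`. Passing from `K` to its half `K'`,
`|K'|⁻¹ χ_{K'} = |K|⁻¹ χ_K + ⟨h_K⟩_{K'} h_K` and `m_{K'} f = m_K f + ⟨h_K⟩_{K'} f_K` with
`⟨h_K⟩_{K'}² = |K|⁻¹`, so the summand for `I` is exactly the increment of `|K|⁻¹ χ_K(t) m_K f`
along the chain `[0, 1) ⊋ ⋯ ⊋ J`. The sum telescopes to `|J|⁻¹ χ_J(t) m_J f`, because the term
for `[0, 1)` is `∫ f = 0`.
-/

attribute [ext] DyadicInterval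

instance : IsProbabilityMeasure circleMeasure :=
  ⟨by simp [circleMeasure]⟩

namespace DyadicInterval

def unit : DyadicInterval := ⟨0, 0, Nat.one_pos⟩

def IsChild (J P : DyadicInterval) : Prop := J = P.left ∨ J = P.right

theorem len_pos (I : DyadicInterval) : 0 < I.len := by
  unfold len; positivity

theorem len_left (I : DyadicInterval) : I.left.len = I.len / 2 := by
  simp only [len, left, pow_succ]
  ring

theorem len_right (I : DyadicInterval) : I.right.len = I.len / 2 := by
  simp only [len, right, pow_succ]
  ring

theorem set_unit : unit.set = Set.Ico 0 1 := by
  simp [set, unit]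

theorem set_subset_Ico (I : DyadicInterval) : I.set ⊆ Set.Ico 0 1 :=
  Set.Ico_subset_Ico (by positivity)
    ((div_le_one (by positivity)).2 (by exact_mod_cast I.hk))

theorem measurableSet_set (I : DyadicInterval) : MeasurableSet I.set := measurableSet_Ico

theorem left_endpoint_mem_set (I : DyadicInterval) : (I.k : ℝ) / 2 ^ I.n ∈ I.set :=
  Set.left_mem_Ico.2 (div_lt_div_of_pos_right (lt_add_one _) (by positivity))

theorem nonempty_set (I : DyadicInterval) : I.set.Nonempty := ⟨_, I.left_endpoint_mem_set⟩

theorem volume_set (I : DyadicInterval) : volume I.set = ENNReal.ofReal I.len := by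
  rw [set, Real.volume_Ico, len, add_div, add_sub_cancel_left, one_div]

theorem measureReal_set (I : DyadicInterval) : volume.real I.set = I.len := by
  rw [measureReal_def, volume_set, ENNReal.toReal_ofReal I.len_pos.le]

theorem mem_set_iff {I : DyadicInterval} {t : ℝ} : t ∈ I.set ↔ 0 ≤ t ∧ ⌊t * 2 ^ I.n⌋₊ = I.k := by
  have h2 : (0 : ℝ) < 2 ^ I.n := by positivity
  rw [set, Set.mem_Ico, div_le_iff₀ h2, lt_div_iff₀ h2]
  constructor
  · rintro ⟨hl, hr⟩
    have ht : 0 ≤ t := nonneg_of_mul_nonneg_left ((Nat.cast_nonneg _).trans hl) h2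
    exact ⟨ht, (Nat.floor_eq_iff (by positivity)).2 ⟨hl, hr⟩⟩
  · rintro ⟨ht, hk⟩
    exact (Nat.floor_eq_iff (by positivity)).1 hk

theorem floor_mul_two_pow_add {t : ℝ} (m d : ℕ) :
    ⌊t * 2 ^ m⌋₊ = ⌊t * 2 ^ (m + d)⌋₊ / 2 ^ d := by
  rw [← Nat.floor_div_natCast, pow_add]
  push_cast
  rw [← mul_assoc, mul_div_cancel_right₀ _ (by positivity)]

theorem mem_set_iff_of_le {I J : DyadicInterval} (hIJ : I.n ≤ J.n) {t : ℝ} (ht : t ∈ J.set) :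
    t ∈ I.set ↔ J.k / 2 ^ (J.n - I.n) = I.k := by
  obtain ⟨d, hd⟩ := Nat.exists_eq_add_of_le hIJ
  rw [mem_set_iff] at ht ⊢
  rw [← ht.2, hd, Nat.add_sub_cancel_left, ← floor_mul_two_pow_add, and_iff_right ht.1]

theorem subset_of_le_of_not_disjoint {I J : DyadicInterval} (hIJ : I.n ≤ J.n)
    (h : ¬Disjoint I.set J.set) : J.set ⊆ I.set := by
  obtain ⟨t, htI, htJ⟩ := Set.not_disjoint_iff.1 h
  exact fun s hs => (mem_set_iff_of_le hIJ hs).2 ((mem_set_iff_of_le hIJ htJ).1 htI)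

theorem subset_or_subset_of_not_disjoint {I J : DyadicInterval} (h : ¬Disjoint I.set J.set) :
    I.set ⊆ J.set ∨ J.set ⊆ I.set :=
  (le_total J.n I.n).imp (fun hle => subset_of_le_of_not_disjoint hle (by rwa [disjoint_comm]))
    (fun hle => subset_of_le_of_not_disjoint hle h)

theorem not_disjoint_of_subset {I J : DyadicInterval} (h : J.set ⊆ I.set) :
    ¬Disjoint I.set J.set := by
  obtain ⟨t, ht⟩ := J.nonempty_set
  exact Set.not_disjoint_iff.2 ⟨t, h ht, ht⟩

theorem n_le_of_subset {I J : DyadicInterval} (h : J.set ⊆ I.set) : I.n ≤ J.n := by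
  have hlen := measure_mono (μ := volume) h
  rwa [volume_set, volume_set, ENNReal.ofReal_le_ofReal_iff I.len_pos.le, len, len,
    inv_le_inv₀ (by positivity) (by positivity),
    pow_le_pow_iff_right₀ (by norm_num : (1 : ℝ) < 2)] at hlen

theorem eq_of_set_eq {I J : DyadicInterval} (h : I.set = J.set) : I = J := by
  have hn : I.n = J.n := le_antisymm (n_le_of_subset h.ge) (n_le_of_subset h.le)
  have hJ := h ▸ I.left_endpoint_mem_set
  rw [mem_set_iff, hn, div_mul_cancel₀ _ (by positivity), Nat.floor_natCast] at hJ
  exact DyadicInterval.ext_iff.2 ⟨hn, hJ.2⟩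

theorem n_lt_of_ssubset {I J : DyadicInterval} (h : J.set ⊂ I.set) : I.n < J.n :=
  (n_le_of_subset h.subset).lt_of_ne fun hn => h.not_subset <| subset_of_le_of_not_disjoint hn.ge
    (by rw [disjoint_comm]; exact not_disjoint_of_subset h.subset)

theorem set_eq_left_union_right (I : DyadicInterval) : I.set = I.left.set ∪ I.right.set := by
  simp only [set, left, right, pow_succ, Nat.cast_mul, Nat.cast_add, Nat.cast_ofNat, Nat.cast_one]
  rw [Set.Ico_union_Ico_eq_Ico]
  · congr 1 <;> field_simp; ring
  · rw [div_le_div_iff_of_pos_right (by positivity)]; linarith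
  · rw [div_le_div_iff_of_pos_right (by positivity)]; linarith

theorem disjoint_left_right (I : DyadicInterval) : Disjoint I.left.set I.right.set := by
  simp only [set, left, right, Nat.cast_mul, Nat.cast_add, Nat.cast_ofNat, Nat.cast_one]
  exact Set.Ico_disjoint_Ico_same

theorem IsChild.n_eq {J P : DyadicInterval} (h : IsChild J P) : J.n = P.n + 1 := by
  rcases h with rfl | rfl <;> rfl

theorem IsChild.ssubset {J P : DyadicInterval} (h : IsChild J P) : J.set ⊂ P.set := by
  refine Set.ssubset_iff_subset_ne.2
    ⟨?_, fun he => by simpa [h.n_eq] using congrArg n (eq_of_set_eq he)⟩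
  rcases h with rfl | rfl <;> rw [set_eq_left_union_right P]
  exacts [Set.subset_union_left, Set.subset_union_right]

theorem subset_left_or_subset_right_of_ssubset {I J : DyadicInterval} (h : J.set ⊂ I.set) :
    J.set ⊆ I.left.set ∨ J.set ⊆ I.right.set := by
  have hn : I.n + 1 ≤ J.n := n_lt_of_ssubset h
  obtain ⟨t, ht⟩ := J.nonempty_set
  rcases set_eq_left_union_right I ▸ h.subset ht with hl | hr
  · exact .inl (subset_of_le_of_not_disjoint hn (Set.not_disjoint_iff.2 ⟨t, hl, ht⟩))
  · exact .inr (subset_of_le_of_not_disjoint hn (Set.not_disjoint_iff.2 ⟨t, hr, ht⟩))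

@[elab_as_elim]
theorem induction_on_children {p : DyadicInterval → Prop} (top : p unit)
    (child : ∀ P J, IsChild J P → p P → p J) (J : DyadicInterval) : p J := by
  obtain ⟨n, k, hk⟩ := J
  induction n generalizing k with
  | zero =>
    obtain rfl : k = 0 := by simpa using hk
    exact top
  | succ n ih =>
    have hP : k / 2 < 2 ^ n := by rw [pow_succ] at hk; omega
    refine child ⟨n, k / 2, hP⟩ _ ?_ (ih _ hP)
    rcases Nat.even_or_odd' k with ⟨m, rfl | rfl⟩
    · exact .inl (DyadicInterval.ext_iff.2 ⟨rfl, by simp only [left]; omega⟩)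
    · exact .inr (DyadicInterval.ext_iff.2 ⟨rfl, by simp only [right]; omega⟩)

/-- Strict ancestors of `J` have distinct generations `< J.n`. -/
theorem finite_setOf_ssubset (J : DyadicInterval) :
    {I : DyadicInterval | J.set ⊂ I.set}.Finite := by
  refine Set.Finite.of_finite_image (f := n) ((Set.finite_Iio J.n).subset ?_)
    fun I₁ (h₁ : J.set ⊂ I₁.set) I₂ (h₂ : J.set ⊂ I₂.set) hn => ?_
  · rintro _ ⟨I, hI, rfl⟩
    exact n_lt_of_ssubset hI
  · obtain ⟨t, ht⟩ := J.nonempty_set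
    have hI₁₂ : ¬Disjoint I₁.set I₂.set := Set.not_disjoint_iff.2 ⟨t, h₁.subset ht, h₂.subset ht⟩
    exact eq_of_set_eq ((subset_of_le_of_not_disjoint hn.ge (by rwa [disjoint_comm])).antisymm
      (subset_of_le_of_not_disjoint hn.le hI₁₂))

noncomputable def ancestors (J : DyadicInterval) : Finset DyadicInterval :=
  (finite_setOf_ssubset J).toFinset

theorem mem_ancestors {I J : DyadicInterval} : I ∈ ancestors J ↔ J.set ⊂ I.set :=
  Set.Finite.mem_toFinset _

theorem ancestors_unit : ancestors unit = ∅ :=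
  Finset.eq_empty_of_forall_notMem fun _ hI =>
    Nat.not_lt_zero _ (n_lt_of_ssubset (mem_ancestors.1 hI))

theorem ancestors_of_isChild {J P : DyadicInterval} (h : IsChild J P) :
    ancestors J = insert P (ancestors P) := by
  ext I
  simp only [Finset.mem_insert, mem_ancestors]
  constructor
  · intro hJI
    have hn : I.n ≤ P.n := by have := n_lt_of_ssubset hJI; rw [h.n_eq] at this; omega
    obtain ⟨t, ht⟩ := J.nonempty_set
    have hPI := subset_of_le_of_not_disjoint hn
      (Set.not_disjoint_iff.2 ⟨t, hJI.subset ht, h.ssubset.subset ht⟩)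
    rcases hPI.ssubset_or_eq with hss | heq
    exacts [.inr hss, .inl (eq_of_set_eq heq).symm]
  · rintro (rfl | hPI)
    exacts [h.ssubset, h.ssubset.trans hPI]

theorem notMem_ancestors_self (P : DyadicInterval) : P ∉ ancestors P :=
  fun h => (mem_ancestors.1 h).ne rfl


theorem ind_of_mem {I : DyadicInterval} {t : ℝ} (h : t ∈ I.set) : I.ind t = 1 :=
  Set.indicator_of_mem h _

theorem ind_of_notMem {I : DyadicInterval} {t : ℝ} (h : t ∉ I.set) : I.ind t = 0 :=
  Set.indicator_of_notMem h _

theorem ind_eq_left_add_right (I : DyadicInterval) (t : ℝ) :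
    I.ind t = I.left.ind t + I.right.ind t := by
  rw [ind, set_eq_left_union_right, Set.indicator_union_of_disjoint I.disjoint_left_right]
  rfl

theorem ind_smul_eq_indicator {E : Type*} [AddCommGroup E] [Module ℝ E] (I : DyadicInterval)
    (g : ℝ → E) (t : ℝ) : I.ind t • g t = I.set.indicator g t := by
  by_cases ht : t ∈ I.set
  · rw [ind_of_mem ht, Set.indicator_of_mem ht, one_smul]
  · rw [ind_of_notMem ht, Set.indicator_of_notMem ht, zero_smul]

theorem inv_sqrt_len_mul_self (I : DyadicInterval) :
    (√I.len)⁻¹ * (√I.len)⁻¹ = I.len⁻¹ := by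
  rw [← mul_inv, Real.mul_self_sqrt I.len_pos.le]

theorem haar_of_notMem {I : DyadicInterval} {t : ℝ} (h : t ∉ I.set) : I.haar t = 0 := by
  rw [set_eq_left_union_right, Set.mem_union, not_or] at h
  rw [haar, ind_of_notMem h.1, ind_of_notMem h.2, sub_zero, mul_zero]

theorem haar_of_mem_left {I : DyadicInterval} {t : ℝ} (h : t ∈ I.left.set) :
    I.haar t = (√I.len)⁻¹ := by
  rw [haar, ind_of_mem h, ind_of_notMem (Set.disjoint_left.1 I.disjoint_left_right h), sub_zero,
    mul_one]

theorem haar_of_mem_right {I : DyadicInterval} {t : ℝ} (h : t ∈ I.right.set) :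
    I.haar t = -(√I.len)⁻¹ := by
  rw [haar, ind_of_mem h, ind_of_notMem (Set.disjoint_right.1 I.disjoint_left_right h), zero_sub,
    mul_neg_one]

theorem haar_mul_self (I : DyadicInterval) (t : ℝ) : I.haar t * I.haar t = I.len⁻¹ * I.ind t := by
  by_cases hl : t ∈ I.left.set
  · rw [haar_of_mem_left hl, inv_sqrt_len_mul_self, ind_eq_left_add_right, ind_of_mem hl,
      ind_of_notMem (Set.disjoint_left.1 I.disjoint_left_right hl), add_zero, mul_one]
  by_cases hr : t ∈ I.right.set
  · rw [haar_of_mem_right hr, neg_mul_neg, inv_sqrt_len_mul_self, ind_eq_left_add_right,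
      ind_of_mem hr, ind_of_notMem hl, zero_add, mul_one]
  · rw [ind_eq_left_add_right, ind_of_notMem hl, ind_of_notMem hr, haar, ind_of_notMem hl,
      ind_of_notMem hr]
    ring

theorem measurable_ind (I : DyadicInterval) : Measurable I.ind :=
  measurable_const.indicator I.measurableSet_set

theorem measurable_haar (I : DyadicInterval) : Measurable I.haar :=
  (I.left.measurable_ind.sub I.right.measurable_ind).const_mul _

theorem norm_ind_le (I : DyadicInterval) (t : ℝ) : ‖I.ind t‖ ≤ 1 := by
  by_cases ht : t ∈ I.set <;> simp [ind_of_mem, ind_of_notMem, ht]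

theorem norm_haar_le (I : DyadicInterval) (t : ℝ) : ‖I.haar t‖ ≤ (√I.len)⁻¹ := by
  have hσ : 0 ≤ (√I.len)⁻¹ := by positivity
  by_cases hl : t ∈ I.left.set
  · rw [haar_of_mem_left hl, Real.norm_of_nonneg hσ]
  by_cases hr : t ∈ I.right.set
  · rw [haar_of_mem_right hr, norm_neg, Real.norm_of_nonneg hσ]
  · rwa [haar, ind_of_notMem hl, ind_of_notMem hr, sub_zero, mul_zero, norm_zero]

section Integrals

variable {μ : Measure ℝ} [IsFiniteMeasure μ]

theorem integrable_ind (I : DyadicInterval) : Integrable I.ind μ :=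
  .of_bound I.measurable_ind.aestronglyMeasurable 1 (ae_of_all _ I.norm_ind_le)

theorem integrable_haar (I : DyadicInterval) : Integrable I.haar μ :=
  .of_bound I.measurable_haar.aestronglyMeasurable _ (ae_of_all _ I.norm_haar_le)

end Integrals

theorem integrable_haar_mul (I : DyadicInterval) {μ : Measure ℝ} {φ : ℝ → ℝ}
    (hφ : Integrable φ μ) : Integrable (fun t => I.haar t * φ t) μ :=
  hφ.bdd_mul I.measurable_haar.aestronglyMeasurable (ae_of_all _ I.norm_haar_le)

section

variable {E : Type*} [NormedAddCommGroup E] [NormedSpace ℝ E]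

theorem setIntegral_circleMeasure (I : DyadicInterval) (g : ℝ → E) :
    ∫ t in I.set, g t ∂circleMeasure = ∫ t in I.set, g t := by
  rw [circleMeasure, Measure.restrict_restrict I.measurableSet_set,
    Set.inter_eq_left.2 I.set_subset_Ico]

theorem integral_ind_smul (I : DyadicInterval) (g : ℝ → E) :
    ∫ t, I.ind t • g t ∂circleMeasure = ∫ t in I.set, g t := by
  simp_rw [ind_smul_eq_indicator]
  rw [integral_indicator I.measurableSet_set, setIntegral_circleMeasure]

theorem integral_ind (I : DyadicInterval) : ∫ t, I.ind t ∂circleMeasure = I.len := by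
  simpa [measureReal_set] using I.integral_ind_smul (fun _ => (1 : ℝ))

theorem integral_haar (I : DyadicInterval) : ∫ t, I.haar t ∂circleMeasure = 0 := by
  simp only [haar]
  rw [integral_const_mul, integral_sub I.left.integrable_ind I.right.integrable_ind,
    integral_ind, integral_ind, len_left, len_right, sub_self, mul_zero]

theorem integral_haar_mul_self (I : DyadicInterval) :
    ∫ t, I.haar t * I.haar t ∂circleMeasure = 1 := by
  simp_rw [haar_mul_self]
  rw [integral_const_mul, integral_ind, inv_mul_cancel₀ I.len_pos.ne']

theorem avg_eq_of_forall_mem {g : ℝ → E} {c : E} [CompleteSpace E] {J : DyadicInterval}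
    (h : ∀ t ∈ J.set, g t = c) : avg g J = c := by
  rw [avg, setIntegral_congr_fun J.measurableSet_set h, setIntegral_const, measureReal_set,
    inv_smul_smul₀ J.len_pos.ne']

theorem avg_haar_left (I : DyadicInterval) : avg I.haar I.left = (√I.len)⁻¹ :=
  avg_eq_of_forall_mem fun _ => haar_of_mem_left

theorem avg_haar_right (I : DyadicInterval) : avg I.haar I.right = -(√I.len)⁻¹ :=
  avg_eq_of_forall_mem fun _ => haar_of_mem_right

theorem haar_eq_avg_of_ssubset {I J : DyadicInterval} (h : J.set ⊂ I.set) {t : ℝ}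
    (ht : t ∈ J.set) : I.haar t = avg I.haar J := by
  rcases subset_left_or_subset_right_of_ssubset h with hl | hr
  · rw [haar_of_mem_left (hl ht), avg_eq_of_forall_mem fun _ hs => haar_of_mem_left (hl hs)]
  · rw [haar_of_mem_right (hr ht), avg_eq_of_forall_mem fun _ hs => haar_of_mem_right (hr hs)]

theorem avg_haar_of_subset_of_ssubset {I J K : DyadicInterval} (hJK : J.set ⊆ K.set)
    (hKI : K.set ⊂ I.set) : avg I.haar J = avg I.haar K := by
  obtain ⟨t, ht⟩ := J.nonempty_set
  rw [← haar_eq_avg_of_ssubset (hJK.trans_ssubset hKI) ht, haar_eq_avg_of_ssubset hKI (hJK ht)]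

theorem avg_haar_eq_zero {I J : DyadicInterval} (h : ¬J.set ⊂ I.set) : avg I.haar J = 0 := by
  by_cases hd : Disjoint I.set J.set
  · exact avg_eq_of_forall_mem fun t ht => haar_of_notMem (Set.disjoint_right.1 hd ht)
  have hIJ : I.set ⊆ J.set := (subset_or_subset_of_not_disjoint hd).elim id
    fun hJI => not_not.1 fun hIJ => h (hJI.ssubset_of_not_subset hIJ)
  rw [avg, ← setIntegral_circleMeasure, setIntegral_eq_integral_of_forall_compl_eq_zero
    fun t ht => haar_of_notMem fun htI => ht (hIJ htI), integral_haar, smul_zero]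

theorem integral_haar_mul_len_inv_mul_ind (I J : DyadicInterval) :
    ∫ t, I.haar t * (J.len⁻¹ * J.ind t) ∂circleMeasure = avg I.haar J := by
  have hpt : ∀ t, I.haar t * (J.len⁻¹ * J.ind t) = J.len⁻¹ * (J.ind t • I.haar t) :=
    fun t => by rw [smul_eq_mul]; ring
  simp_rw [hpt]
  rw [integral_const_mul, integral_ind_smul, avg, smul_eq_mul]

theorem integral_haar_mul_haar_of_ssubset {I J : DyadicInterval} (h : J.set ⊂ I.set) :
    ∫ t, I.haar t * J.haar t ∂circleMeasure = 0 := by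
  have hpt : ∀ t, I.haar t * J.haar t = avg I.haar J * J.haar t := fun t => by
    by_cases ht : t ∈ J.set
    · rw [haar_eq_avg_of_ssubset h ht]
    · rw [haar_of_notMem ht, mul_zero, mul_zero]
  simp_rw [hpt]
  rw [integral_const_mul, integral_haar, mul_zero]

theorem integral_haar_mul_haar (I J : DyadicInterval) :
    ∫ t, I.haar t * J.haar t ∂circleMeasure = if I = J then 1 else 0 := by
  split_ifs with hIJ
  · rw [hIJ, integral_haar_mul_self]
  by_cases hd : Disjoint I.set J.set
  · have hpt : ∀ t, I.haar t * J.haar t = 0 := fun t => by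
      by_cases ht : t ∈ I.set
      · rw [haar_of_notMem (Set.disjoint_left.1 hd ht), mul_zero]
      · rw [haar_of_notMem ht, zero_mul]
    simp_rw [hpt, integral_zero]
  have hne : I.set ≠ J.set := fun h => hIJ (eq_of_set_eq h)
  rcases subset_or_subset_of_not_disjoint hd with hsub | hsub
  · simp_rw [mul_comm (I.haar _)]
    exact integral_haar_mul_haar_of_ssubset (hsub.ssubset_of_ne hne)
  · exact integral_haar_mul_haar_of_ssubset (hsub.ssubset_of_ne hne.symm)

variable {f : ℝ → E}

theorem haarCoeff_eq_inv_sqrt_smul (hf : Integrable f circleMeasure) (I : DyadicInterval) :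
    haarCoeff f I = (√I.len)⁻¹ • ((∫ t in I.left.set, f t) - ∫ t in I.right.set, f t) := by
  have hpt : ∀ t, I.haar t • f t = (√I.len)⁻¹ • (I.left.ind t • f t - I.right.ind t • f t) :=
    fun t => by rw [haar, mul_smul, sub_smul]
  simp_rw [haarCoeff, hpt, ind_smul_eq_indicator]
  rw [integral_smul, integral_sub (hf.indicator I.left.measurableSet_set)
    (hf.indicator I.right.measurableSet_set), integral_indicator I.left.measurableSet_set,
    integral_indicator I.right.measurableSet_set, setIntegral_circleMeasure,
    setIntegral_circleMeasure]

theorem setIntegral_eq_left_add_right (hf : Integrable f circleMeasure) (I : DyadicInterval) :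
    ∫ t in I.set, f t = (∫ t in I.left.set, f t) + ∫ t in I.right.set, f t := by
  have hfI : ∀ J : DyadicInterval, IntegrableOn f J.set :=
    fun J => (show IntegrableOn f (Set.Ico 0 1) volume from hf).mono_set J.set_subset_Ico
  rw [set_eq_left_union_right]
  exact setIntegral_union I.disjoint_left_right I.right.measurableSet_set (hfI _) (hfI _)

theorem avg_left (hf : Integrable f circleMeasure) (I : DyadicInterval) :
    avg f I.left = avg f I + (√I.len)⁻¹ • haarCoeff f I := by
  rw [avg, avg, haarCoeff_eq_inv_sqrt_smul hf, setIntegral_eq_left_add_right hf I, smul_smul,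
    inv_sqrt_len_mul_self, len_left, inv_div]
  module

theorem avg_right (hf : Integrable f circleMeasure) (I : DyadicInterval) :
    avg f I.right = avg f I - (√I.len)⁻¹ • haarCoeff f I := by
  rw [avg, avg, haarCoeff_eq_inv_sqrt_smul hf, setIntegral_eq_left_add_right hf I, smul_smul,
    inv_sqrt_len_mul_self, len_right, inv_div]
  module

theorem avg_unit (hf0 : ∫ t, f t ∂circleMeasure = 0) : avg f unit = 0 := by
  rw [avg, set_unit, ← circleMeasure, hf0, smul_zero]

/-- For `J ⊊ I`, the change of `|K|⁻¹ χ_K(t) m_K f` as `K` passes from `I` to its half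
containing `J`; `avg I.haar J` is the value of `h_I` on that half. -/
noncomputable def avgIncrement (f : ℝ → E) (t : ℝ) (I J : DyadicInterval) : E :=
  (I.haar t * avg I.haar J) • avg f I +
    (I.len⁻¹ * I.ind t * avg I.haar J + I.haar t * I.len⁻¹) • haarCoeff f I

theorem IsChild.avg_haar_mul_self {J P : DyadicInterval} (h : IsChild J P) :
    avg P.haar J * avg P.haar J = P.len⁻¹ := by
  rcases h with rfl | rfl
  · rw [avg_haar_left, inv_sqrt_len_mul_self]
  · rw [avg_haar_right, neg_mul_neg, inv_sqrt_len_mul_self]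

theorem IsChild.len_inv_mul_ind_eq {J P : DyadicInterval} (h : IsChild J P) (t : ℝ) :
    J.len⁻¹ * J.ind t = P.len⁻¹ * P.ind t + avg P.haar J * P.haar t := by
  have hσ := inv_sqrt_len_mul_self P
  rcases h with rfl | rfl
  · rw [len_left, avg_haar_left, haar, ind_eq_left_add_right P]
    linear_combination (P.right.ind t - P.left.ind t) * hσ
  · rw [len_right, avg_haar_right, haar, ind_eq_left_add_right P]
    linear_combination (P.left.ind t - P.right.ind t) * hσ

theorem IsChild.avg_eq (hf : Integrable f circleMeasure) {J P : DyadicInterval} (h : IsChild J P) :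
    avg f J = avg f P + avg P.haar J • haarCoeff f P := by
  rcases h with rfl | rfl
  · rw [avg_left hf, avg_haar_left]
  · rw [avg_right hf, avg_haar_right, neg_smul, sub_eq_add_neg]

theorem IsChild.len_inv_mul_ind_smul_avg (hf : Integrable f circleMeasure) {J P : DyadicInterval}
    (h : IsChild J P) (t : ℝ) :
    (J.len⁻¹ * J.ind t) • avg f J = (P.len⁻¹ * P.ind t) • avg f P + avgIncrement f t P J := by
  rw [h.len_inv_mul_ind_eq, h.avg_eq hf, avgIncrement]
  match_scalars
  · ring
  · linear_combination P.haar t * h.avg_haar_mul_self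

theorem len_inv_mul_ind_smul_avg_eq_sum_ancestors (hf : Integrable f circleMeasure)
    (hf0 : ∫ t, f t ∂circleMeasure = 0) (t : ℝ) (J : DyadicInterval) :
    (J.len⁻¹ * J.ind t) • avg f J = ∑ I ∈ ancestors J, avgIncrement f t I J := by
  induction J using induction_on_children with
  | top => rw [ancestors_unit, Finset.sum_empty, avg_unit hf0, smul_zero]
  | child P J hJ ih =>
    rw [ancestors_of_isChild hJ, Finset.sum_insert (notMem_ancestors_self P),
      hJ.len_inv_mul_ind_smul_avg hf, ih, add_comm]
    refine congrArg _ (Finset.sum_congr rfl fun I hI => ?_)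
    rw [avgIncrement, avgIncrement,
      avg_haar_of_subset_of_ssubset hJ.ssubset.subset (mem_ancestors.1 hI)]

end

end DyadicInterval

open DyadicInterval

theorem haarCoeff_finsetSum_smul {E : Type*} [NormedAddCommGroup E] [NormedSpace ℝ E]
    [CompleteSpace E] {ι : Type*} (s : Finset ι) {φ : ι → ℝ → ℝ}
    (hφ : ∀ i ∈ s, Integrable (φ i) circleMeasure) (x : ι → E) (I : DyadicInterval) :
    haarCoeff (fun t => ∑ i ∈ s, φ i t • x i) I =
      ∑ i ∈ s, (∫ t, I.haar t * φ i t ∂circleMeasure) • x i := by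
  unfold haarCoeff
  simp only [Finset.smul_sum, smul_smul]
  rw [integral_finsetSum _ fun i hi => ((I.integrable_haar_mul (hφ i hi)).smul_const (x i))]
  simp_rw [integral_smul_const]

section Operators

variable {H : Type*} [NormedAddCommGroup H] [InnerProductSpace ℂ H] [CompleteSpace H]

theorem support_adjC (b : OpCoeffs H) : (adjC b).support = b.support :=
  Finsupp.support_mapRange_of_injective _ _ (adjoint (𝕜 := ℂ) (E := H) (F := H)).injective

theorem haarCoeff_para (b : OpCoeffs H) (f : ℝ → H) {J : DyadicInterval} (hJ : J ∈ b.support) :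
    haarCoeff (para b f) J = b J (avg f J) := by
  unfold para
  rw [haarCoeff_finsetSum_smul _ (fun K _ => K.integrable_haar)]
  simp_rw [integral_haar_mul_haar, ite_smul, one_smul, zero_smul, Finset.sum_ite_eq, if_pos hJ]

theorem delta_adjC_para (b : OpCoeffs H) (f : ℝ → H) (t : ℝ) :
    delta (adjC b) (para b f) t =
      ∑ J ∈ b.support, (adjoint (b J) ∘L b J) ((J.len⁻¹ * J.ind t) • avg f J) := by
  rw [delta, support_adjC]
  refine Finset.sum_congr rfl fun J hJ => ?_
  rw [haarCoeff_para b f hJ, map_smul_of_tower]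
  rfl

theorem haarCoeff_sweep (b : OpCoeffs H) (I : DyadicInterval) :
    haarCoeff (sweep b) I = ∑ J ∈ b.support.filter (fun J => J.set ⊂ I.set),
      avg I.haar J • (adjoint (b J) ∘L b J) := by
  unfold sweep
  rw [haarCoeff_finsetSum_smul _ fun J _ => J.integrable_ind.const_mul _, Finset.sum_filter]
  refine Finset.sum_congr rfl fun J _ => ?_
  rw [integral_haar_mul_len_inv_mul_ind]
  split_ifs with h
  · rfl
  · rw [avg_haar_eq_zero h, zero_smul]

theorem isSelfAdjoint_haarCoeff_sweep (b : OpCoeffs H) (I : DyadicInterval) :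
    IsSelfAdjoint (haarCoeff (sweep b) I) := by
  rw [haarCoeff_sweep]
  refine isSelfAdjoint_sum _ fun J _ => ?_
  rw [RCLike.real_smul_eq_coe_smul (K := ℂ)]
  exact .smul (by simp [IsSelfAdjoint]) (IsSelfAdjoint.star_mul_self (b J))

theorem paraF_paraStarF_Dop_summands_eq (b : OpCoeffs H) (f : ℝ → H) (t : ℝ)
    (I : DyadicInterval) :
    I.haar t • haarCoeff (sweep b) I (avg f I) +
        (I.len⁻¹ * I.ind t) • adjoint (haarCoeff (sweep b) I) (haarCoeff f I) +
        I.haar t • (I.len⁻¹ • ∑ J ∈ b.support.filter fun J => J.set ⊂ I.set,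
          adjoint (b J) ∘L b J) (haarCoeff f I) =
      ∑ J ∈ b.support.filter (fun J => J.set ⊂ I.set),
        (adjoint (b J) ∘L b J) (avgIncrement f t I J) := by
  rw [(isSelfAdjoint_haarCoeff_sweep b I).adjoint_eq, haarCoeff_sweep]
  simp only [sum_apply, smul_apply, Finset.smul_sum, ← Finset.sum_add_distrib]
  refine Finset.sum_congr rfl fun J _ => ?_
  simp only [avgIncrement, map_add, map_smul_of_tower, add_smul, smul_smul]
  abel

theorem paraF_sweep_add_paraStarF_sweep_add_Dop (b : OpCoeffs H) (f : ℝ → H) (t : ℝ) :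
    paraF (sweep b) f t + paraStarF (sweep b) f t + Dop b f t =
      ∑ J ∈ b.support, (adjoint (b J) ∘L b J) (∑ I ∈ ancestors J, avgIncrement f t I J) := by
  set T := b.support.biUnion ancestors
  have hT : ∀ I ∉ T, b.support.filter (fun J => J.set ⊂ I.set) = ∅ := fun I hI =>
    Finset.filter_eq_empty_iff.2 fun J hJ hJI =>
      hI (Finset.mem_biUnion.2 ⟨J, hJ, mem_ancestors.2 hJI⟩)
  rw [paraF, paraStarF, Dop,
    tsum_eq_sum (s := T) fun I hI => by simp [haarCoeff_sweep, hT I hI],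
    tsum_eq_sum (s := T) fun I hI => by simp [haarCoeff_sweep, hT I hI],
    tsum_eq_sum (s := T) fun I hI => by simp [hT I hI],
    ← Finset.sum_add_distrib, ← Finset.sum_add_distrib]
  simp_rw [paraF_paraStarF_Dop_summands_eq, map_sum]
  refine Finset.sum_comm' fun I J => ?_
  simp only [T, Finset.mem_biUnion, Finset.mem_filter, mem_ancestors]
  exact ⟨fun ⟨_, hJ, hJI⟩ => ⟨hJI, hJ⟩, fun ⟨hJI, hJ⟩ => ⟨⟨J, hJ, hJI⟩, hJ, hJI⟩⟩

end Operators

/-- `π_B^* π_B = π_{S_B} + π_{S_B}^* + D_B`. -/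
theorem paraAdj_para_eq_sweep_decomposition {H : Type*} [NormedAddCommGroup H] [InnerProductSpace ℂ H] [CompleteSpace H]
    (b : OpCoeffs H) (f : ℝ → H) (hf : MemLp f 2 circleMeasure)
    (hf0 : (∫ t, f t ∂circleMeasure) = 0) :
    ∀ᵐ t ∂circleMeasure,
      delta (adjC b) (para b f) t =
        paraF (sweep b) f t + paraStarF (sweep b) f t + Dop b f t := by
  refine ae_of_all _ fun t => ?_
  rw [delta_adjC_para, paraF_sweep_add_paraStarF_sweep_add_Dop]
  refine Finset.sum_congr rfl fun J _ => ?_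
  rw [len_inv_mul_ind_smul_avg_eq_sum_ancestors (hf.integrable one_le_two) hf0]
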